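/- arXiv:math/0208121 — 3 statements merged into one kernel-verified Lean document; each statement's English description precedes it below -/
import Mathlib

section
/- For every λ > 0, the operator F_λ = P_λ ℱ P_λ is a compact operator on L²(ℝ). -/
open MeasureTheory Complex Set FourierTransform

noncomputable section

/-- `F` is the Fourier–Plancherel transform on `L²(ℝ)`: the unitary operator agreeing with
the Fourier integral `x ↦ ∫ y, exp(2πixy) f y` on integrable square-integrable functions. -/
def IsFourierPlancherel
    (F : Lp ℂ 2 (volume : Measure ℝ) ≃ₗᵢ[ℂ] Lp ℂ 2 (volume : Measure ℝ)) : Prop :=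
  ∀ (f : ℝ → ℂ) (_ : Integrable f volume) (hf : MemLp f 2 volume),
    (F (hf.toLp f) : ℝ → ℂ) =ᵐ[volume] (𝓕⁻ f : ℝ → ℂ)

/-- `P_λ` : multiplication by the indicator function of `(-λ, λ)` on `L²(ℝ)`. -/
def Pproj (lam : ℝ) (f : Lp ℂ 2 (volume : Measure ℝ)) : Lp ℂ 2 (volume : Measure ℝ) :=
  ((Lp.memLp f).indicator (measurableSet_Ioo : MeasurableSet (Ioo (-lam) lam))).toLp _

/-!
Expanding the kernel `exp (2πixy)` in its Taylor series, the `n`-th partial sum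
`∑_{k<n} (2πi)^k / k! · x^k y^k` is a sum of `n` rank-one kernels, so the operator it defines on
`(-λ, λ)` (`taylorOp λ n`) is compact. On `(-λ, λ)²` the remainder of the series is at most
`2 (2πλ²)^n / n!`, and by Cauchy–Schwarz a kernel bounded by `C` on a set `s` of finite measure
defines an operator on `L²` of norm at most `C |s|`. Hence `taylorOp λ n → F_λ` in operator norm,
and a norm limit of compact operators is compact.
-/

open Filter Topology
open scoped ENNReal

lemma ContinuousLinearMap.isCompactOperator_smulRight {𝕜 E F : Type*} [NontriviallyNormedField 𝕜]
    [LocallyCompactSpace 𝕜] [NormedAddCommGroup E] [NormedSpace 𝕜 E] [NormedAddCommGroup F]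
    [NormedSpace 𝕜 F]
    (φ : E →L[𝕜] 𝕜) (v : F) : IsCompactOperator (φ.smulRight v) :=
  (isCompactOperator_of_locallyCompactSpace_dom φ).clm_comp (toSpanSingleton 𝕜 v)

namespace MeasureTheory

variable {α E : Type*} [MeasurableSpace α] {μ : Measure α} {s : Set α}
  [NormedAddCommGroup E]

lemma MemLp.integrableOn_of_measure_ne_top {p : ℝ≥0∞} (hp : 1 ≤ p) {f : α → E}
    (hf : MemLp f p μ) (hμs : μ s ≠ ∞) : IntegrableOn f s μ :=
  have : IsFiniteMeasure (μ.restrict s) := isFiniteMeasure_restrict.2 hμs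
  (hf.restrict s).integrable hp

lemma Lp.norm_le_of_ae_norm_le_indicator_const (hs : MeasurableSet s) (hμs : μ s ≠ ∞)
    {C : ℝ} (hC : 0 ≤ C) {g : Lp E 2 μ} (hg : ∀ᵐ x ∂μ, ‖g x‖ ≤ s.indicator (fun _ ↦ C) x) :
    ‖g‖ ≤ C * √(μ s).toReal := by
  have hg' : ∀ᵐ x ∂μ, ‖g x‖ ≤ ‖s.indicator (fun _ ↦ C) x‖ := by
    filter_upwards [hg] with x hx
    exact hx.trans (le_abs_self _)
  rw [Lp.norm_def]
  refine (ENNReal.toReal_mono ?_ (eLpNorm_mono_ae hg')).trans_eq ?_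
  · exact (eLpNorm_indicator_const_le _ _).trans_lt (by finiteness) |>.ne
  · rw [eLpNorm_indicator_const hs two_ne_zero ENNReal.ofNat_ne_top]
    simp [ENNReal.toReal_rpow, Real.sqrt_eq_rpow, abs_of_nonneg hC]

lemma setIntegral_norm_le_sqrt_measure_mul_norm (hμs : μ s ≠ ∞) (f : Lp E 2 μ) :
    ∫ x in s, ‖f x‖ ∂μ ≤ √(μ s).toReal * ‖f‖ := by
  have hf : AEStronglyMeasurable f (μ.restrict s) := (Lp.aestronglyMeasurable f).restrict
  have hHolder : eLpNorm f 1 (μ.restrict s) ≤ eLpNorm f 2 μ * μ s ^ (1 / 2 : ℝ) := by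
    refine (eLpNorm_le_eLpNorm_mul_rpow_measure_univ one_le_two hf).trans ?_
    have hexponent : 1 / (1 : ℝ≥0∞).toReal - 1 / (2 : ℝ≥0∞).toReal = 1 / 2 := by norm_num
    rw [Measure.restrict_apply_univ, hexponent]
    gcongr
    exact Measure.restrict_le_self
  rw [integral_norm_eq_lintegral_enorm hf, ← eLpNorm_one_eq_lintegral_enorm, Lp.norm_def,
    Real.sqrt_eq_rpow, mul_comm, ENNReal.toReal_rpow, ← ENNReal.toReal_mul]
  exact ENNReal.toReal_mono (by finiteness) hHolder

lemma Lp.norm_le_of_ae_eq_indicator_setIntegral_kernel {𝕜 : Type*} [NormedField 𝕜]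
    [NormedSpace ℝ E] [NormedSpace 𝕜 E] (hs : MeasurableSet s) (hμs : μ s ≠ ∞)
    {K : α → α → 𝕜} {C : ℝ} (hC : 0 ≤ C) (hK : ∀ x ∈ s, ∀ y ∈ s, ‖K x y‖ ≤ C)
    {f g : Lp E 2 μ} (hg : g =ᵐ[μ] s.indicator fun x ↦ ∫ y in s, K x y • f y ∂μ) :
    ‖g‖ ≤ C * (μ s).toReal * ‖f‖ := by
  have hf : IntegrableOn f s μ := (Lp.memLp f).integrableOn_of_measure_ne_top one_le_two hμs
  have hpointwise : ∀ x ∈ s, ‖∫ y in s, K x y • f y ∂μ‖ ≤ C * ∫ y in s, ‖f y‖ ∂μ := by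
    intro x hx
    rw [← integral_const_mul]
    refine norm_integral_le_of_norm_le (hf.norm.const_mul C) ?_
    filter_upwards [ae_restrict_mem hs] with y hy
    exact (norm_smul_le _ _).trans (by gcongr; exact hK x hx y hy)
  have hbound : ∀ᵐ x ∂μ, ‖g x‖ ≤ s.indicator (fun _ ↦ C * ∫ y in s, ‖f y‖ ∂μ) x := by
    filter_upwards [hg] with x hx
    rw [hx]
    by_cases hxs : x ∈ s
    · simpa [hxs] using hpointwise x hxs
    · simp [hxs]
  calc ‖g‖ ≤ C * (∫ y in s, ‖f y‖ ∂μ) * √(μ s).toReal :=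
        norm_le_of_ae_norm_le_indicator_const hs hμs
          (mul_nonneg hC (integral_nonneg fun _ ↦ norm_nonneg _)) hbound
    _ ≤ C * (√(μ s).toReal * ‖f‖) * √(μ s).toReal := by
        gcongr
        exact setIntegral_norm_le_sqrt_measure_mul_norm hμs f
    _ = C * (μ s).toReal * ‖f‖ := by
        rw [mul_comm (√_) ‖f‖, mul_assoc, mul_assoc, Real.mul_self_sqrt ENNReal.toReal_nonneg]
        ring

end MeasureTheory

open scoped Real

section FourierKernel

variable {lam : ℝ}

def fourierPhase (x y : ℝ) : ℂ := 2 * π * I * x * y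

def taylorKernel (n : ℕ) (x y : ℝ) : ℂ :=
  ∑ k ∈ Finset.range n, fourierPhase x y ^ k / k.factorial

@[fun_prop]
lemma continuous_fourierPhase (x : ℝ) : Continuous (fourierPhase x) := by
  unfold fourierPhase; fun_prop

lemma continuous_taylorKernel (n : ℕ) (x : ℝ) : Continuous (taylorKernel n x) := by
  unfold taylorKernel; fun_prop

lemma norm_fourierPhase_le {x y : ℝ} (hx : x ∈ Ioo (-lam) lam) (hy : y ∈ Ioo (-lam) lam) :
    ‖fourierPhase x y‖ ≤ 2 * π * lam ^ 2 := by
  have hx' : |x| ≤ lam := abs_le.2 ⟨hx.1.le, hx.2.le⟩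
  have hy' : |y| ≤ lam := abs_le.2 ⟨hy.1.le, hy.2.le⟩
  have hlam : 0 ≤ lam := (abs_nonneg x).trans hx'
  simp only [fourierPhase, norm_mul, Complex.norm_real, Complex.norm_ofNat, Complex.norm_I,
    Real.norm_eq_abs, abs_of_pos Real.pi_pos, mul_one]
  rw [sq, ← mul_assoc]
  gcongr

lemma norm_cexp_fourierPhase_sub_taylorKernel_le {x y : ℝ} (hx : x ∈ Ioo (-lam) lam)
    (hy : y ∈ Ioo (-lam) lam) {n : ℕ} (hn : 4 * π * lam ^ 2 ≤ n + 1) :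
    ‖cexp (fourierPhase x y) - taylorKernel n x y‖ ≤ 2 * (2 * π * lam ^ 2) ^ n / n.factorial := by
  have hz := norm_fourierPhase_le hx hy
  calc ‖cexp (fourierPhase x y) - taylorKernel n x y‖
      ≤ ‖fourierPhase x y‖ ^ n / n.factorial * 2 := by
        refine Complex.exp_bound' ?_
        rw [div_le_iff₀ (by positivity)]
        push_cast
        linarith
    _ ≤ 2 * (2 * π * lam ^ 2) ^ n / n.factorial := by
        rw [mul_comm, mul_div_assoc]
        gcongr

end FourierKernel

section FourierOnInterval

variable (lam : ℝ)

local notation "H" => Lp ℂ 2 (volume : Measure ℝ)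

def indicatorIoo : Lp ℂ ∞ (volume : Measure ℝ) :=
  indicatorConstLp ∞ (s := Ioo (-lam) lam) measurableSet_Ioo measure_Ioo_lt_top.ne 1

lemma coeFn_indicatorIoo :
    indicatorIoo lam =ᵐ[volume] (Ioo (-lam) lam).indicator fun _ ↦ (1 : ℂ) :=
  indicatorConstLp_coeFn

def PprojCLM : H →L[ℂ] H :=
  (ContinuousLinearMap.mul ℂ ℂ).holderL volume ∞ 2 2 (indicatorIoo lam)

lemma coeFn_Pproj (f : H) : Pproj lam f =ᵐ[volume] (Ioo (-lam) lam).indicator f :=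
  MemLp.coeFn_toLp _

lemma PprojCLM_apply (f : H) : PprojCLM lam f = Pproj lam f := by
  refine Lp.ext ?_
  filter_upwards [(ContinuousLinearMap.mul ℂ ℂ).coeFn_holder (r := 2) (indicatorIoo lam) f,
    coeFn_indicatorIoo lam, coeFn_Pproj lam f] with x hmul hind hproj
  simp only [PprojCLM, ContinuousLinearMap.holderL_apply_apply, hmul, hind, hproj]
  by_cases hx : x ∈ Ioo (-lam) lam <;> simp [hx]

lemma integrableOn_Ioo (f : H) : IntegrableOn f (Ioo (-lam) lam) :=
  (Lp.memLp f).integrableOn_of_measure_ne_top one_le_two measure_Ioo_lt_top.ne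

lemma integrableOn_Ioo_continuous_smul {g : ℝ → ℂ} (hg : Continuous g) (f : H) :
    IntegrableOn (fun y ↦ g y • f y) (Ioo (-lam) lam) :=
  (integrableOn_Ioo lam f).continuousOn_mul_of_subset hg.continuousOn isCompact_Icc
    measurableSet_Ioo Ioo_subset_Icc_self

lemma memLp_indicator_Ioo_of_continuous {g : ℝ → ℂ} (hg : Continuous g) :
    MemLp ((Ioo (-lam) lam).indicator g) 2 volume := by
  have : IsFiniteMeasure (volume.restrict (Ioo (-lam) lam)) :=
    isFiniteMeasure_restrict.2 measure_Ioo_lt_top.ne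
  obtain ⟨C, hC⟩ := (isCompact_Icc (a := -lam) (b := lam)).exists_bound_of_continuousOn
    hg.continuousOn
  rw [memLp_indicator_iff_restrict measurableSet_Ioo]
  refine (memLp_top_of_bound hg.aestronglyMeasurable C ?_).mono_exponent le_top
  exact ae_restrict_of_forall_mem measurableSet_Ioo fun x hx ↦ hC x (Ioo_subset_Icc_self hx)

def monomialOn (k : ℕ) : H :=
  (memLp_indicator_Ioo_of_continuous (lam := lam) (continuous_ofReal.pow k)).toLp

lemma coeFn_monomialOn (k : ℕ) :
    monomialOn lam k =ᵐ[volume] (Ioo (-lam) lam).indicator fun x ↦ (x : ℂ) ^ k :=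
  MemLp.coeFn_toLp _

lemma inner_monomialOn (k : ℕ) (f : H) :
    inner ℂ (monomialOn lam k) f = ∫ y in Ioo (-lam) lam, (y : ℂ) ^ k * f y := by
  rw [L2.inner_def, ← integral_indicator measurableSet_Ioo]
  refine integral_congr_ae ?_
  filter_upwards [coeFn_monomialOn lam k] with x hx
  by_cases hxs : x ∈ Ioo (-lam) lam
  · simp [hx, hxs, ← ofReal_pow, mul_comm]
  · simp [hx, hxs]

def taylorOp (n : ℕ) : H →L[ℂ] H :=
  ∑ k ∈ Finset.range n, ((2 * π * I) ^ k / k.factorial) •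
    (innerSL ℂ (monomialOn lam k)).smulRight (monomialOn lam k)

lemma isCompactOperator_taylorOp (n : ℕ) : IsCompactOperator (taylorOp lam n) :=
  Submodule.sum_mem (compactOperator _ H H) fun _ _ ↦ Submodule.smul_mem _ _ <|
    ContinuousLinearMap.isCompactOperator_smulRight _ _

lemma coeFn_taylorOp (n : ℕ) (f : H) :
    taylorOp lam n f =ᵐ[volume] (Ioo (-lam) lam).indicator
      fun x ↦ ∫ y in Ioo (-lam) lam, taylorKernel n x y • f y := by
  have hterm : ∀ᵐ x ∂volume, ∀ k : ℕ,
      (((2 * π * I) ^ k / k.factorial * inner ℂ (monomialOn lam k) f) • monomialOn lam k :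
        H) x = (Ioo (-lam) lam).indicator
          (fun x ↦ ∫ y in Ioo (-lam) lam, (fourierPhase x y ^ k / k.factorial) • f y) x := by
    refine ae_all_iff.2 fun k ↦ ?_
    filter_upwards [Lp.coeFn_smul ((2 * π * I) ^ k / k.factorial * inner ℂ (monomialOn lam k) f)
      (monomialOn lam k), coeFn_monomialOn lam k] with x hsmul hmon
    by_cases hx : x ∈ Ioo (-lam) lam
    · have hkernel : ∀ y, (fourierPhase x y ^ k / k.factorial) • f y
          = ((2 * π * I) ^ k / k.factorial * x ^ k) * ((y : ℂ) ^ k * f y) := fun y ↦ by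
        simp only [fourierPhase, smul_eq_mul]
        ring
      rw [hsmul, Pi.smul_apply, hmon, indicator_of_mem hx, indicator_of_mem hx, inner_monomialOn,
        smul_eq_mul]
      simp_rw [hkernel, integral_const_mul]
      ring
    · simp [hsmul, hmon, hx]
  have hsum : taylorOp lam n f = ∑ k ∈ Finset.range n,
      ((2 * π * I) ^ k / k.factorial * inner ℂ (monomialOn lam k) f) • monomialOn lam k := by
    simp [taylorOp, smul_smul]
  rw [hsum]
  filter_upwards [Lp.coeFn_fun_finsetSum (E := ℂ) (p := 2) (μ := volume) _ _, hterm] with x hx hterm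
  rw [hx, Finset.sum_congr rfl fun k _ ↦ hterm k]
  by_cases hxs : x ∈ Ioo (-lam) lam
  · simp only [indicator_of_mem hxs, taylorKernel, Finset.sum_smul]
    exact (integral_finsetSum _ fun _ _ ↦
      integrableOn_Ioo_continuous_smul lam (by fun_prop) f).symm
  · simp [hxs]

lemma fourierInv_indicator_Ioo (f : ℝ → ℂ) (x : ℝ) :
    𝓕⁻ ((Ioo (-lam) lam).indicator f) x =
      ∫ y in Ioo (-lam) lam, cexp (fourierPhase x y) • f y := by
  rw [Real.fourierInv_eq', ← integral_indicator measurableSet_Ioo]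
  congr 1 with y
  by_cases hy : y ∈ Ioo (-lam) lam
  · simp only [indicator_of_mem hy, Real.inner_apply, fourierPhase]
    push_cast
    ring_nf
  · simp [hy]

lemma coeFn_Pproj_Fourier_Pproj {F : H ≃ₗᵢ[ℂ] H} (hF : IsFourierPlancherel F) (f : H) :
    Pproj lam (F (Pproj lam f)) =ᵐ[volume] (Ioo (-lam) lam).indicator
      fun x ↦ ∫ y in Ioo (-lam) lam, cexp (fourierPhase x y) • f y := by
  have hFourier := hF _ ((integrable_indicator_iff measurableSet_Ioo).2 (integrableOn_Ioo lam f))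
    ((Lp.memLp f).indicator measurableSet_Ioo)
  filter_upwards [coeFn_Pproj lam (F (Pproj lam f)), hFourier] with x hproj hx
  by_cases hxs : x ∈ Ioo (-lam) lam
  · rw [hproj, indicator_of_mem hxs, indicator_of_mem hxs, ← fourierInv_indicator_Ioo]
    exact hx
  · rw [hproj, indicator_of_notMem hxs, indicator_of_notMem hxs]

def Flambda (F : H ≃ₗᵢ[ℂ] H) : H →L[ℂ] H :=
  PprojCLM lam ∘L F.toLinearIsometry.toContinuousLinearMap ∘L PprojCLM lam

lemma Flambda_apply (F : H ≃ₗᵢ[ℂ] H) (f : H) :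
    Flambda lam F f = Pproj lam (F (Pproj lam f)) := by
  simp [Flambda, PprojCLM_apply]

lemma norm_taylorOp_sub_Flambda_le {F : H ≃ₗᵢ[ℂ] H} (hF : IsFourierPlancherel F) {n : ℕ}
    (hn : 4 * π * lam ^ 2 ≤ n + 1) :
    ‖taylorOp lam n - Flambda lam F‖
      ≤ 2 * (2 * π * lam ^ 2) ^ n / n.factorial * (volume (Ioo (-lam) lam)).toReal := by
  refine ContinuousLinearMap.opNorm_le_bound _ (by positivity) fun f ↦ ?_
  rw [sub_apply, norm_sub_rev, Flambda_apply]
  refine Lp.norm_le_of_ae_eq_indicator_setIntegral_kernel measurableSet_Ioo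
    measure_Ioo_lt_top.ne (K := fun x y ↦ cexp (fourierPhase x y) - taylorKernel n x y)
    (by positivity) (fun x hx y hy ↦ norm_cexp_fourierPhase_sub_taylorKernel_le hx hy hn) ?_
  filter_upwards [Lp.coeFn_sub (Pproj lam (F (Pproj lam f))) (taylorOp lam n f),
    coeFn_Pproj_Fourier_Pproj lam hF f, coeFn_taylorOp lam n f] with x hsub hFourier htaylor
  rw [hsub, Pi.sub_apply, hFourier, htaylor]
  by_cases hxs : x ∈ Ioo (-lam) lam
  · simp only [indicator_of_mem hxs, sub_smul]
    exact (integral_sub (integrableOn_Ioo_continuous_smul lam (by fun_prop) f)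
      (integrableOn_Ioo_continuous_smul lam (continuous_taylorKernel n x) f)).symm
  · simp [hxs]

end FourierOnInterval

theorem Flambda_isCompactOperator_general (lam : ℝ)
    (F : Lp ℂ 2 (volume : Measure ℝ) ≃ₗᵢ[ℂ] Lp ℂ 2 (volume : Measure ℝ))
    (hF : IsFourierPlancherel F) :
    IsCompactOperator (fun f : Lp ℂ 2 (volume : Measure ℝ) =>
      Pproj lam (F (Pproj lam f))) := by
  have hFlambda : (fun f ↦ Pproj lam (F (Pproj lam f))) = Flambda lam F :=
    funext fun f ↦ (Flambda_apply lam F f).symm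
  have hbound : Tendsto (fun n : ℕ ↦ 2 * (2 * π * lam ^ 2) ^ n / n.factorial
      * (volume (Ioo (-lam) lam)).toReal) atTop (𝓝 0) := by
    simpa [mul_div_assoc] using
      ((FloorSemiring.tendsto_pow_div_factorial_atTop (2 * π * lam ^ 2)).const_mul 2).mul_const
        (volume (Ioo (-lam) lam)).toReal
  have hconv : Tendsto (taylorOp lam) atTop (𝓝 (Flambda lam F)) := by
    rw [tendsto_iff_norm_sub_tendsto_zero]
    refine squeeze_zero' (Eventually.of_forall fun n ↦ norm_nonneg _) ?_ hbound
    filter_upwards [eventually_ge_atTop ⌈4 * π * lam ^ 2⌉₊] with n hn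
    exact norm_taylorOp_sub_Flambda_le lam hF <| (Nat.ceil_le.1 hn).trans (by linarith)
  rw [hFlambda]
  exact isCompactOperator_of_tendsto hconv (Eventually.of_forall (isCompactOperator_taylorOp lam))

/-- For every `λ > 0`, the operator `F_λ = P_λ ℱ P_λ` is a compact operator on `L²(ℝ)`. -/
theorem Flambda_isCompactOperator (lam : ℝ) (hlam : 0 < lam)
    (F : Lp ℂ 2 (volume : Measure ℝ) ≃ₗᵢ[ℂ] Lp ℂ 2 (volume : Measure ℝ))
    (hF : IsFourierPlancherel F) :
    IsCompactOperator (fun f : Lp ℂ 2 (volume : Measure ℝ) =>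
      Pproj lam (F (Pproj lam f))) :=
  Flambda_isCompactOperator_general lam F hF
end
end

section
/- For every λ > 0 there exists a constant c < 1 such that for every u ∈ L²(ℝ) vanishing a.e. outside (−λ,λ) one has ‖P_λ ℱ u‖_{L²} ≤ c‖u‖_{L²}; in other words, the operator norm of F_λ = P_λ ℱ P_λ restricted to L²(−λ,λ) is strictly less than 1. -/
/-!
If no such `c` existed, there would be unit vectors `uₙ` supported in `(-λ, λ)` with
`‖P_λ ℱ uₙ‖ → 1`. Each `ℱ uₙ` is the Fourier integral of an integrable function supported in
`(-λ, λ)`, so these functions are uniformly bounded and uniformly Lipschitz, and by Arzelà–Ascoli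
a subsequence of `P_λ ℱ uₙ` converges in `L²`. By Pythagoras `ℱ uₙ - P_λ ℱ uₙ → 0`, so `ℱ uₙ`,
and with it `uₙ`, converges to a unit vector `u` supported in `(-λ, λ)` such that `ℱ u` vanishes
outside `(-λ, λ)`. But `ℱ u` extends to an entire function, so `ℱ u = 0`, and `u = 0`.
-/

open MeasureTheory Complex Set FourierTransform

noncomputable section

open Real Filter Topology

local notation "L2" => Lp ℂ 2 (volume : Measure ℝ)

theorem IsCompact.exists_strictMono_uniformCauchySeqOn {α β : Type*} [TopologicalSpace α]
    [MetricSpace β] {K : Set α} (hK : IsCompact K) {S : Set β} (hS : IsCompact S)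
    {g : ℕ → α → β} (hg : EquicontinuousOn g K) (hgS : ∀ n, ∀ x ∈ K, g n x ∈ S) :
    ∃ σ : ℕ → ℕ, StrictMono σ ∧ UniformCauchySeqOn (fun k ↦ g (σ k)) atTop K := by
  have : CompactSpace K := isCompact_iff_compactSpace.mp hK
  let φ : ℕ → BoundedContinuousFunction K β := fun n ↦
    .mkOfCompact ⟨K.domRestrict (g n), (hg.continuousOn n).domRestrict⟩
  have hφ : Equicontinuous ((↑) : range φ → K → β) := by
    convert ((equicontinuous_restrict_iff g).mpr hg).comp (rangeSplitting φ) with ψ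
    rw [← apply_rangeSplitting φ ψ]
    rfl
  obtain ⟨_, -, σ, hσ, hlim⟩ :=
    (BoundedContinuousFunction.arzela_ascoli S hS (range φ)
      (by rintro - x ⟨n, rfl⟩; exact hgS n x x.2) hφ).tendsto_subseq
      (fun n ↦ subset_closure (mem_range_self n))
  refine ⟨σ, hσ, Metric.uniformCauchySeqOn_iff.mpr fun ε hε ↦ ?_⟩
  obtain ⟨N, hN⟩ := Metric.cauchySeq_iff.mp hlim.cauchySeq ε hε
  exact ⟨N, fun m hm n hn x hx ↦
    (BoundedContinuousFunction.dist_coe_le_dist (f := φ (σ m)) ⟨x, hx⟩).trans_lt (hN m hm n hn)⟩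


namespace MeasureTheory.Lp

open ENNReal

variable {α E : Type*} [MeasurableSpace α] {μ : Measure α} [NormedAddCommGroup E] {p : ℝ≥0∞}
  {s : Set α}

theorem norm_le_of_ae_eq_indicator (hs : MeasurableSet s) (hμs : μ s ≠ ∞) {f : Lp E p μ}
    {g : α → E} (hf : f =ᵐ[μ] s.indicator g) {C : ℝ} (hC : 0 ≤ C) (hg : ∀ x ∈ s, ‖g x‖ ≤ C) :
    ‖f‖ ≤ μ.real s ^ p.toReal⁻¹ * C := by
  have hbound : eLpNorm g p (μ.restrict s) ≤ μ s ^ p.toReal⁻¹ * ENNReal.ofReal C := by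
    simpa using eLpNorm_le_of_ae_bound (p := p) ((ae_restrict_iff' hs).mpr (.of_forall hg))
  rw [norm_def, eLpNorm_congr_ae hf, eLpNorm_indicator_eq_eLpNorm_restrict hs, measureReal_def,
    toReal_rpow, ← toReal_ofReal hC, ← toReal_mul]
  exact toReal_mono (mul_ne_top (rpow_ne_top_of_nonneg (by positivity) hμs) ofReal_ne_top) hbound

theorem cauchySeq_of_uniformCauchySeqOn [Fact (1 ≤ p)] (hs : MeasurableSet s) (hμs : μ s ≠ ∞)
    {w : ℕ → Lp E p μ} {g : ℕ → α → E} (hw : ∀ n, w n =ᵐ[μ] s.indicator (g n))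
    (hg : UniformCauchySeqOn g atTop s) : CauchySeq w := by
  set M := μ.real s ^ p.toReal⁻¹
  refine Metric.cauchySeq_iff.mpr fun ε hε ↦ ?_
  obtain ⟨N, hN⟩ := Metric.uniformCauchySeqOn_iff.mp hg (ε / (M + 1)) (by positivity)
  refine ⟨N, fun m hm n hn ↦ ?_⟩
  have hdiff : w m - w n =ᵐ[μ] s.indicator (g m - g n) := by
    filter_upwards [coeFn_sub (w m) (w n), hw m, hw n] with x hx hxm hxn
    rw [hx, Pi.sub_apply, hxm, hxn, indicator_sub', Pi.sub_apply]
  calc dist (w m) (w n) = ‖w m - w n‖ := _root_.dist_eq_norm _ _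
    _ ≤ M * (ε / (M + 1)) := norm_le_of_ae_eq_indicator hs hμs hdiff (by positivity)
        fun x hx ↦ by simpa [_root_.dist_eq_norm] using (hN m hm n hn x hx).le
    _ < ε := by
        rw [mul_div_assoc', div_lt_iff₀ (by positivity)]
        nlinarith

end MeasureTheory.Lp

section Integrability

variable {α E : Type*} [MeasurableSpace α] {μ : Measure α} [NormedAddCommGroup E] {s : Set α}
  {f : α → E}

theorem eLpNorm_one_le_of_ae_eq_indicator (hf : AEStronglyMeasurable f μ) (hs : MeasurableSet s)
    (hfs : f =ᵐ[μ] s.indicator f) : eLpNorm f 1 μ ≤ μ s ^ (2⁻¹ : ℝ) * eLpNorm f 2 μ := by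
  have holder := eLpNorm_le_eLpNorm_mul_rpow_measure_univ (p := 1) (q := 2) (μ := μ.restrict s)
    one_le_two hf.restrict
  rw [Measure.restrict_apply_univ, show 1 / (1 : ENNReal).toReal - 1 / (2 : ENNReal).toReal =
    (2⁻¹ : ℝ) by norm_num, mul_comm] at holder
  calc eLpNorm f 1 μ = eLpNorm f 1 (μ.restrict s) := by
        rw [eLpNorm_congr_ae hfs, eLpNorm_indicator_eq_eLpNorm_restrict hs]
    _ ≤ μ s ^ (2⁻¹ : ℝ) * eLpNorm f 2 μ :=
        holder.trans (by gcongr; exact Measure.restrict_le_self)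

theorem MeasureTheory.MemLp.integrable_of_ae_eq_indicator (hf : MemLp f 2 μ)
    (hs : MeasurableSet s) (hμs : μ s ≠ ⊤) (hfs : f =ᵐ[μ] s.indicator f) : Integrable f μ :=
  memLp_one_iff_integrable.mp ⟨hf.1, (eLpNorm_one_le_of_ae_eq_indicator hf.1 hs hfs).trans_lt
    (ENNReal.mul_lt_top (ENNReal.rpow_lt_top_of_nonneg (by norm_num) hμs) hf.2)⟩

theorem MeasureTheory.MemLp.integral_norm_le_of_ae_eq_indicator (hf : MemLp f 2 μ)
    (hs : MeasurableSet s) (hμs : μ s ≠ ⊤) (hfs : f =ᵐ[μ] s.indicator f) :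
    ∫ x, ‖f x‖ ∂μ ≤ μ.real s ^ (2⁻¹ : ℝ) * (eLpNorm f 2 μ).toReal := by
  rw [integral_norm_eq_lintegral_enorm hf.1, ← eLpNorm_one_eq_lintegral_enorm, measureReal_def,
    ENNReal.toReal_rpow, ← ENNReal.toReal_mul]
  exact ENNReal.toReal_mono (ENNReal.mul_ne_top (ENNReal.rpow_ne_top_of_nonneg (by norm_num) hμs)
    hf.eLpNorm_ne_top) (eLpNorm_one_le_of_ae_eq_indicator hf.1 hs hfs)

end Integrability

section FourierAnalytic

variable {E : Type*} [NormedAddCommGroup E] {f : ℝ → E} {R : ℝ}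

theorem ae_abs_le_or_eq_zero (hfR : ∀ᵐ y, y ∉ Ioo (-R) R → f y = 0) :
    ∀ᵐ y, |y| ≤ R ∨ f y = 0 := by
  filter_upwards [hfR] with y hy
  by_cases h : y ∈ Ioo (-R) R
  · exact .inl (abs_le.mpr ⟨h.1.le, h.2.le⟩)
  · exact .inr (hy h)

variable [NormedSpace ℂ E]

theorem Real.lipschitzWith_fourier (hf : Integrable f) (hf' : Integrable fun x : ℝ ↦ x • f x) :
    LipschitzWith (2 * π * ∫ x, ‖x • f x‖).toNNReal (𝓕 f) := by
  have hderiv := Real.hasDerivAt_fourier hf hf'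
  refine lipschitzWith_of_nnnorm_deriv_le (fun w ↦ (hderiv w).differentiableAt) fun w ↦ ?_
  rw [(hderiv w).deriv, ← NNReal.coe_le_coe, coe_nnnorm, Real.coe_toNNReal _ (by positivity),
    ← integral_const_mul]
  refine (VectorFourier.norm_fourierIntegral_le_integral_norm _ _ _ _ _).trans_eq ?_
  congr 1 with x
  rw [norm_smul, norm_smul, norm_mul, norm_mul, norm_mul, norm_neg, norm_I, norm_real,
    norm_real, Real.norm_eq_abs, Real.norm_eq_abs, abs_of_pos pi_pos, RCLike.norm_ofNat]
  ring

theorem lipschitzWith_fourierInv_of_ae_supported (hf : Integrable f)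
    (hfR : ∀ᵐ y, y ∉ Ioo (-R) R → f y = 0) :
    LipschitzWith (2 * π * R * ∫ x, ‖f x‖).toNNReal (𝓕⁻ f) := by
  have hbound : ∀ᵐ x, ‖x • f x‖ ≤ R * ‖f x‖ := by
    filter_upwards [ae_abs_le_or_eq_zero hfR] with x hx
    rcases hx with hx | hx
    · rw [norm_smul, Real.norm_eq_abs]; gcongr
    · simp [hx]
  have hf' : Integrable fun x : ℝ ↦ x • f x :=
    (hf.norm.const_mul R).mono' (continuous_id.aestronglyMeasurable.smul hf.1) hbound
  have hL := (Real.lipschitzWith_fourier hf hf').comp LipschitzWith.id.neg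
  rw [mul_one] at hL
  have hinv : 𝓕⁻ f = 𝓕 f ∘ (-id) := funext (Real.fourierInv_eq_fourier_neg f)
  rw [hinv, mul_assoc, ← integral_const_mul]
  exact hL.weaken <| Real.toNNReal_le_toNNReal <| mul_le_mul_of_nonneg_left
    (integral_mono_ae hf'.norm (hf.norm.const_mul R) hbound) (by positivity)

theorem norm_cexp_two_pi_I_mul_le (y : ℝ) (z : ℂ) :
    ‖cexp (2 * π * I * y * z)‖ ≤ rexp (2 * π * |y| * ‖z‖) := by
  refine (norm_exp_le_exp_norm _).trans_eq ?_
  rw [norm_mul, norm_mul, norm_mul, norm_mul, norm_I, norm_real, norm_real, Real.norm_eq_abs,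
    Real.norm_eq_abs, abs_of_pos pi_pos, RCLike.norm_ofNat, mul_one]

theorem differentiable_integral_cexp_smul_of_ae_supported (hf : Integrable f)
    (hfR : ∀ᵐ y, y ∉ Ioo (-R) R → f y = 0) :
    Differentiable ℂ fun z : ℂ ↦ ∫ y : ℝ, cexp (2 * π * I * y * z) • f y := by
  intro z₀
  have hexp : ∀ {y : ℝ} {z : ℂ}, |y| ≤ R → ‖z‖ ≤ ‖z₀‖ + 1 →
      ‖cexp (2 * π * I * y * z)‖ ≤ rexp (2 * π * R * (‖z₀‖ + 1)) := fun {y z} hy hz ↦ by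
    have hR : 0 ≤ R := (abs_nonneg y).trans hy
    exact (norm_cexp_two_pi_I_mul_le y z).trans (by gcongr)
  have hball : ∀ z ∈ Metric.ball z₀ 1, ‖z‖ ≤ ‖z₀‖ + 1 := fun z hz ↦ by
    have := norm_le_norm_add_norm_sub' z z₀
    rw [mem_ball_iff_norm] at hz
    linarith
  refine (hasDerivAt_integral_of_dominated_loc_of_deriv_le (μ := volume)
    (F' := fun z y ↦ (2 * π * I * y * cexp (2 * π * I * y * z)) • f y)
    (bound := fun y ↦ 2 * π * R * rexp (2 * π * R * (‖z₀‖ + 1)) * ‖f y‖)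
    (Metric.ball_mem_nhds z₀ one_pos) (.of_forall fun z ↦ by fun_prop) ?_ (by fun_prop) ?_
    (hf.norm.const_mul _) (.of_forall fun y z _ ↦ ?_)).2.differentiableAt
  · refine (hf.norm.const_mul (rexp (2 * π * R * (‖z₀‖ + 1)))).mono' (by fun_prop) ?_
    filter_upwards [ae_abs_le_or_eq_zero hfR] with y hy
    rcases hy with hy | hy
    · rw [norm_smul]; gcongr; exact hexp hy (by linarith [norm_nonneg z₀])
    · simp [hy]
  · filter_upwards [ae_abs_le_or_eq_zero hfR] with y hy z hz
    rcases hy with hy | hy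
    · rw [norm_smul, norm_mul, norm_mul, norm_mul, norm_mul, norm_I, norm_real, norm_real,
        Real.norm_eq_abs, Real.norm_eq_abs, abs_of_pos pi_pos, RCLike.norm_ofNat, mul_one]
      have hR : 0 ≤ R := (abs_nonneg y).trans hy
      gcongr
      exact hexp hy (hball z hz)
    · simp [hy]
  · simpa [mul_comm] using ((hasDerivAt_id z).const_mul (2 * π * I * y)).cexp.smul_const (f y)

theorem analyticOnNhd_fourierInv_of_ae_supported [CompleteSpace E] (hf : Integrable f)
    (hfR : ∀ᵐ y, y ∉ Ioo (-R) R → f y = 0) : AnalyticOnNhd ℝ (𝓕⁻ f) univ := by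
  have hext : 𝓕⁻ f = (fun z : ℂ ↦ ∫ y : ℝ, cexp (2 * π * I * y * z) • f y) ∘ ofRealCLM := by
    ext x
    simp only [Real.fourierInv_eq', Function.comp_apply, ofRealCLM_apply, Real.inner_apply]
    congr with y
    push_cast
    ring_nf
  rw [hext]
  exact fun x _ ↦ ((differentiable_integral_cexp_smul_of_ae_supported hf hfR).analyticAt _
    |>.restrictScalars).comp (ofRealCLM.analyticAt x)

theorem fourierInv_eq_zero_of_ae_supported [CompleteSpace E] (hf : Integrable f)
    (hfR : ∀ᵐ y, y ∉ Ioo (-R) R → f y = 0) {U : Set ℝ} (hU : IsOpen U) (hUne : U.Nonempty)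
    (hfU : 𝓕⁻ f =ᵐ[volume.restrict U] 0) : 𝓕⁻ f = 0 := by
  have hanalytic := analyticOnNhd_fourierInv_of_ae_supported hf hfR
  have hcont : Continuous (𝓕⁻ f) := continuous_iff_continuousAt.mpr fun x ↦
    (hanalytic x (mem_univ x)).continuousAt
  obtain ⟨x, hx⟩ := hUne
  have hzero : 𝓕⁻ f =ᶠ[𝓝 x] 0 := mem_of_superset (hU.mem_nhds hx)
    (Measure.eqOn_open_of_ae_eq hfU hU hcont.continuousOn continuousOn_const)
  exact funext fun y ↦ hanalytic.eqOn_zero_of_preconnected_of_eventuallyEq_zero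
    isPreconnected_univ (mem_univ x) hzero (mem_univ y)

end FourierAnalytic

section Pproj

variable {lam : ℝ}

theorem Pproj_coeFn (f : L2) : Pproj lam f =ᵐ[volume] (Ioo (-lam) lam).indicator f :=
  MemLp.coeFn_toLp _

theorem Pproj_eq_of_ae_eq {f g : L2} (h : (g : ℝ → ℂ) =ᵐ[volume] (Ioo (-lam) lam).indicator f) :
    Pproj lam f = g :=
  Lp.ext ((Pproj_coeFn f).trans h.symm)

theorem Pproj_eq_self_iff {u : L2} :
    Pproj lam u = u ↔ ∀ᵐ x : ℝ, x ∉ Ioo (-lam) lam → u x = 0 := by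
  refine ⟨fun h ↦ ?_, fun h ↦ Pproj_eq_of_ae_eq ?_⟩
  · filter_upwards [h ▸ Pproj_coeFn (lam := lam) u] with x hx hxI
    rw [hx, indicator_of_notMem hxI]
  · filter_upwards [h] with x hx
    by_cases hxI : x ∈ Ioo (-lam) lam
    · rw [indicator_of_mem hxI]
    · rw [indicator_of_notMem hxI, hx hxI]

theorem Pproj_Pproj (f : L2) : Pproj lam (Pproj lam f) = Pproj lam f :=
  Pproj_eq_self_iff.mpr (by
    filter_upwards [Pproj_coeFn (lam := lam) f] with x hx hxI
    rw [hx, indicator_of_notMem hxI])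

theorem Pproj_sub (f g : L2) : Pproj lam (f - g) = Pproj lam f - Pproj lam g := by
  refine Pproj_eq_of_ae_eq ?_
  filter_upwards [Pproj_coeFn (lam := lam) f, Pproj_coeFn (lam := lam) g,
    Lp.coeFn_sub (Pproj lam f) (Pproj lam g), Lp.coeFn_sub f g] with x hf hg hPfg hfg
  rw [hPfg, Pi.sub_apply, hf, hg, indicator_apply, indicator_apply, indicator_apply, hfg]
  split_ifs <;> simp

theorem Pproj_smul (c : ℂ) (f : L2) : Pproj lam (c • f) = c • Pproj lam f := by
  refine Pproj_eq_of_ae_eq ?_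
  filter_upwards [Pproj_coeFn (lam := lam) f, Lp.coeFn_smul c (Pproj lam f),
    Lp.coeFn_smul c f] with x hf hcPf hcf
  rw [hcPf, Pi.smul_apply, hf, indicator_apply, indicator_apply, hcf]
  split_ifs <;> simp

theorem norm_Pproj_le (f : L2) : ‖Pproj lam f‖ ≤ ‖f‖ := by
  rw [Lp.norm_def, Lp.norm_def, eLpNorm_congr_ae (Pproj_coeFn f)]
  exact ENNReal.toReal_mono (Lp.eLpNorm_ne_top f) (eLpNorm_indicator_le _)

theorem continuous_Pproj : Continuous (Pproj lam) :=
  LipschitzWith.continuous (K := 1) <| .of_dist_le_mul fun f g ↦ by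
    simpa [dist_eq_norm, Pproj_sub] using norm_Pproj_le (lam := lam) (f - g)

theorem isClosed_setOf_Pproj_eq_self : IsClosed {f : L2 | Pproj lam f = f} :=
  isClosed_eq continuous_Pproj continuous_id

theorem norm_sq_eq_norm_Pproj_sq_add (f : L2) :
    ‖f‖ ^ 2 = ‖Pproj lam f‖ ^ 2 + ‖f - Pproj lam f‖ ^ 2 := by
  have horth : inner ℂ (Pproj lam f) (f - Pproj lam f) = 0 := by
    rw [L2.inner_def]
    refine integral_eq_zero_of_ae ?_
    filter_upwards [Pproj_coeFn (lam := lam) f, Lp.coeFn_sub f (Pproj lam f)] with x hPf hsub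
    rw [hsub, Pi.sub_apply, hPf, indicator_apply]
    split_ifs <;> simp
  simpa [sq] using norm_add_sq_eq_norm_sq_add_norm_sq_of_inner_eq_zero _ _ horth

theorem tendsto_of_tendsto_Pproj {x : ℕ → L2} {v : L2} (hx : ∀ n, ‖x n‖ ≤ 1) (hv : ‖v‖ = 1)
    (hPx : Tendsto (fun n ↦ Pproj lam (x n)) atTop (𝓝 v)) : Tendsto x atTop (𝓝 v) := by
  have hbound : ∀ n, ‖x n - Pproj lam (x n)‖ ≤ √(1 - ‖Pproj lam (x n)‖ ^ 2) := by
    intro n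
    have hpyth := norm_sq_eq_norm_Pproj_sq_add (lam := lam) (x n)
    have hsq : ‖x n‖ ^ 2 ≤ 1 := pow_le_one₀ (norm_nonneg _) (hx n)
    exact Real.le_sqrt_of_sq_le (by linarith)
  have hlim : Tendsto (fun n ↦ √(1 - ‖Pproj lam (x n)‖ ^ 2)) atTop (𝓝 0) := by
    simpa [hv] using ((hPx.norm.pow 2).const_sub 1).sqrt
  have hdiff := squeeze_zero_norm hbound hlim
  simpa using hPx.add hdiff

end Pproj

section Plancherel

variable {lam : ℝ}

theorem integrable_of_Pproj_eq_self {u : L2} (hu : Pproj lam u = u) : Integrable u :=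
  (Lp.memLp u).integrable_of_ae_eq_indicator measurableSet_Ioo measure_Ioo_lt_top.ne
    (by simpa only [hu] using Pproj_coeFn (lam := lam) u)

theorem integral_norm_le_of_Pproj_eq_self {u : L2} (hu : Pproj lam u = u) :
    ∫ x, ‖u x‖ ≤ volume.real (Ioo (-lam) lam) ^ (2⁻¹ : ℝ) * ‖u‖ :=
  (Lp.memLp u).integral_norm_le_of_ae_eq_indicator measurableSet_Ioo measure_Ioo_lt_top.ne
    (by simpa only [hu] using Pproj_coeFn (lam := lam) u)

theorem exists_norm_eq_one_lt_norm_Pproj_apply {Φ : Type*} [FunLike Φ L2 L2]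
    [LinearMapClass Φ ℂ L2 L2] (F : Φ) {c : ℝ} {u : L2} (hu : Pproj lam u = u)
    (hlt : c * ‖u‖ < ‖Pproj lam (F u)‖) :
    ∃ v : L2, Pproj lam v = v ∧ ‖v‖ = 1 ∧ c < ‖Pproj lam (F v)‖ := by
  have hu0 : u ≠ 0 := by
    rintro rfl
    have hP0 : Pproj lam (0 : L2) = 0 := by simpa using Pproj_smul (lam := lam) 0 0
    simp [hP0] at hlt
  have hnorm : 0 < ‖u‖ := norm_pos_iff.mpr hu0
  refine ⟨(‖u‖ : ℂ)⁻¹ • u, by rw [Pproj_smul, hu], ?_, ?_⟩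
  · rw [norm_smul, norm_inv, norm_real, norm_norm, inv_mul_cancel₀ hnorm.ne']
  · rwa [map_smul, Pproj_smul, norm_smul, norm_inv, norm_real, norm_norm, ← div_eq_inv_mul,
      lt_div_iff₀ hnorm]

variable {F : L2 ≃ₗᵢ[ℂ] L2}

theorem IsFourierPlancherel.coeFn_apply (hF : IsFourierPlancherel F) {u : L2}
    (hu : Integrable u) : F u =ᵐ[volume] 𝓕⁻ (u : ℝ → ℂ) := by
  simpa using hF u hu (Lp.memLp u)

theorem IsFourierPlancherel.eq_zero_of_Pproj_eq_self (hF : IsFourierPlancherel F) {u : L2}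
    (hu : Pproj lam u = u) (hFu : Pproj lam (F u) = F u) : u = 0 := by
  have hint := integrable_of_Pproj_eq_self hu
  have hFu_eq := hF.coeFn_apply hint
  have hvanish : 𝓕⁻ (u : ℝ → ℂ) =ᵐ[volume.restrict (Ioi lam)] 0 := by
    rw [EventuallyEq, ae_restrict_iff' measurableSet_Ioi]
    filter_upwards [hFu_eq, Pproj_eq_self_iff.mp hFu] with x hx hxout hxI
    rw [Pi.zero_apply, ← hx, hxout fun h ↦ (lt_asymm h.2 hxI).elim]
  have hzero := fourierInv_eq_zero_of_ae_supported hint (Pproj_eq_self_iff.mp hu) isOpen_Ioi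
    nonempty_Ioi hvanish
  have hFu0 : F u = 0 := Lp.ext (hFu_eq.trans (hzero ▸ (Lp.coeFn_zero ℂ 2 volume).symm))
  exact (map_eq_zero_iff F F.injective).mp hFu0

theorem IsFourierPlancherel.exists_strictMono_cauchySeq_Pproj_apply
    (hF : IsFourierPlancherel F) {u : ℕ → L2} (hu : ∀ n, Pproj lam (u n) = u n) {C : ℝ}
    (hC : ∀ n, ‖u n‖ ≤ C) :
    ∃ σ : ℕ → ℕ, StrictMono σ ∧ CauchySeq fun k ↦ Pproj lam (F (u (σ k))) := by
  set M := volume.real (Ioo (-lam) lam) ^ (2⁻¹ : ℝ) * C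
  have hint n := integrable_of_Pproj_eq_self (hu n)
  have hL1 n : ∫ x, ‖u n x‖ ≤ M :=
    (integral_norm_le_of_Pproj_eq_self (hu n)).trans
      (mul_le_mul_of_nonneg_left (hC n) (by positivity))
  have hbdd : ∀ n, ∀ x ∈ Icc (-lam) lam, 𝓕⁻ (u n : ℝ → ℂ) x ∈ Metric.closedBall 0 M :=
    fun n x _ ↦ mem_closedBall_zero_iff.mpr
      ((VectorFourier.norm_fourierIntegral_le_integral_norm _ _ _ _ _).trans (hL1 n))
  have hlip n : LipschitzWith (2 * π * |lam| * M).toNNReal (𝓕⁻ (u n : ℝ → ℂ)) :=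
    (lipschitzWith_fourierInv_of_ae_supported (hint n) (Pproj_eq_self_iff.mp (hu n))).weaken
      (Real.toNNReal_le_toNNReal (mul_le_mul (by gcongr; exact le_abs_self lam) (hL1 n)
        (integral_nonneg fun _ ↦ norm_nonneg _) (by positivity)))
  obtain ⟨σ, hσ, hcauchy⟩ := isCompact_Icc.exists_strictMono_uniformCauchySeqOn
    (isCompact_closedBall 0 M)
    ((LipschitzWith.uniformEquicontinuous _ _ hlip).equicontinuous.equicontinuousOn _) hbdd
  exact ⟨σ, hσ, Lp.cauchySeq_of_uniformCauchySeqOn measurableSet_Ioo measure_Ioo_lt_top.ne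
    (fun k ↦ (Pproj_coeFn _).trans (hF.coeFn_apply (hint _)).indicator)
    (hcauchy.mono Ioo_subset_Icc_self)⟩

theorem IsFourierPlancherel.not_tendsto_norm_Pproj_apply (hF : IsFourierPlancherel F)
    {u : ℕ → L2} (hu : ∀ n, Pproj lam (u n) = u n) (hu1 : ∀ n, ‖u n‖ = 1) :
    ¬ Tendsto (fun n ↦ ‖Pproj lam (F (u n))‖) atTop (𝓝 1) := by
  intro hlim
  obtain ⟨σ, hσ, hcauchy⟩ :=
    hF.exists_strictMono_cauchySeq_Pproj_apply hu fun n ↦ (hu1 n).le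
  obtain ⟨v, hv⟩ := cauchySeq_tendsto_of_complete hcauchy
  have hv1 : ‖v‖ = 1 := tendsto_nhds_unique hv.norm (hlim.comp hσ.tendsto_atTop)
  have hFu : Tendsto (fun k ↦ F (u (σ k))) atTop (𝓝 v) :=
    tendsto_of_tendsto_Pproj (fun k ↦ by rw [F.norm_map, hu1]) hv1 hv
  have hu_lim : Tendsto (fun k ↦ u (σ k)) atTop (𝓝 (F.symm v)) := by
    simpa [Function.comp_def] using (F.symm.continuous.tendsto v).comp hFu
  have hPu : Pproj lam (F.symm v) = F.symm v :=
    isClosed_setOf_Pproj_eq_self.mem_of_tendsto hu_lim (.of_forall fun k ↦ hu _)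
  have hPv : Pproj lam v = v :=
    isClosed_setOf_Pproj_eq_self.mem_of_tendsto hv (.of_forall fun k ↦ Pproj_Pproj _)
  have hzero := hF.eq_zero_of_Pproj_eq_self hPu (by rwa [F.apply_symm_apply])
  simp [(map_eq_zero_iff _ F.symm.injective).mp hzero] at hv1

end Plancherel

theorem Flambda_norm_lt_one_general (lam : ℝ)
    (F : Lp ℂ 2 (volume : Measure ℝ) ≃ₗᵢ[ℂ] Lp ℂ 2 (volume : Measure ℝ))
    (hF : IsFourierPlancherel F) :
    ∃ c : ℝ, c < 1 ∧
      ∀ u : Lp ℂ 2 (volume : Measure ℝ),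
        (∀ᵐ x : ℝ, x ∉ Ioo (-lam) lam → u x = 0) →
        ‖Pproj lam (F u)‖ ≤ c * ‖u‖ := by
  by_contra! h
  have hunit (n : ℕ) :
      ∃ v : L2, Pproj lam v = v ∧ ‖v‖ = 1 ∧ 1 - 1 / (n + 1) < ‖Pproj lam (F v)‖ := by
    obtain ⟨u, hu, hlt⟩ := h (1 - 1 / (n + 1)) (by simp; positivity)
    exact exists_norm_eq_one_lt_norm_Pproj_apply F (Pproj_eq_self_iff.mpr hu) hlt
  choose v hPv hv1 hlt using hunit
  refine hF.not_tendsto_norm_Pproj_apply hPv hv1 <| tendsto_of_tendsto_of_tendsto_of_le_of_le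
    ?_ tendsto_const_nhds (fun n ↦ (hlt n).le) fun n ↦ ?_
  · simpa using tendsto_one_div_add_atTop_nhds_zero_nat.const_sub (1 : ℝ)
  · exact (norm_Pproj_le _).trans (by rw [F.norm_map, hv1])

/-- For every `λ > 0` there is a constant `c < 1` such that for every `u ∈ L²(ℝ)` vanishing
a.e. outside `(−λ,λ)` one has `‖P_λ ℱ u‖ ≤ c ‖u‖`: the operator norm of `F_λ = P_λ ℱ P_λ`
restricted to `L²(−λ,λ)` is strictly less than `1`. -/
theorem Flambda_norm_lt_one (lam : ℝ) (hlam : 0 < lam)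
    (F : Lp ℂ 2 (volume : Measure ℝ) ≃ₗᵢ[ℂ] Lp ℂ 2 (volume : Measure ℝ))
    (hF : IsFourierPlancherel F) :
    ∃ c : ℝ, c < 1 ∧
      ∀ u : Lp ℂ 2 (volume : Measure ℝ),
        (∀ᵐ x : ℝ, x ∉ Ioo (-lam) lam → u x = 0) →
        ‖Pproj lam (F u)‖ ≤ c * ‖u‖ :=
  Flambda_norm_lt_one_general lam F hF
end
end

section
/- Let λ > 0 and ε ∈ {+1,−1}. There exists an entire function Φ : ℂ → ℂ such that Φ(x) = ψ_ε(x) for every real x, and Φ(t) = g_ε(t) for a.e. t ∈ (−λ,λ); that is, ψ_ε is the (unique) entire function whose restriction to (−λ,λ) coincides with g_ε = (1 + εF_λ)^{−1}(1_{(−λ,λ)}·2cos(2πλ·)). -/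
/-! The candidate `Φ z = 2 cos (2πλz) - 2ε ∫₀^λ cos (2πzt) g(t) dt` is entire, being an integral
over a compact interval of a kernel that is entire in `z`, and it restricts to `ψ_ε` on `ℝ`.
Since `g` is even, the inverse Fourier integral of `1_{(-λ,λ)} g` at `x` is
`2 ∫₀^λ cos (2πxt) g(t) dt`, so on `(-λ,λ)` the equation `g + ε F_λ g = 2 cos (2πλ·)` says exactly
that `Φ = g` a.e. there. Uniqueness is the identity theorem: two entire functions agreeing a.e. on a
real interval agree on it by continuity, and hence everywhere. -/

open MeasureTheory Complex Set FourierTransform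

noncomputable section

/-- The operator `F_λ = P_λ ℱ P_λ`. -/
def Fop (lam : ℝ)
    (F : Lp ℂ 2 (volume : Measure ℝ) ≃ₗᵢ[ℂ] Lp ℂ 2 (volume : Measure ℝ))
    (f : Lp ℂ 2 (volume : Measure ℝ)) : Lp ℂ 2 (volume : Measure ℝ) :=
  Pproj lam (F (Pproj lam f))

/-- `ψ_ε(x) = 2cos(2πλx) − ε·2∫₀^λ cos(2πxt) g_ε(t) dt`. -/
def psiFun (lam ε : ℝ) (g : Lp ℂ 2 (volume : Measure ℝ)) : ℝ → ℂ := fun x =>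
  2 * Real.cos (2 * Real.pi * lam * x) -
    (ε : ℂ) * 2 * ∫ t in (0:ℝ)..lam, (Real.cos (2 * Real.pi * x * t) : ℂ) * g t

open scoped Interval
open Filter Topology

theorem MeasureTheory.MemLp.intervalIntegrable {E : Type*} [NormedAddCommGroup E] {f : ℝ → E}
    {μ : Measure ℝ} [IsLocallyFiniteMeasure μ] {p : ENNReal} (hf : MemLp f p μ) (hp : 1 ≤ p)
    (a b : ℝ) : IntervalIntegrable f μ a b :=
  ((hf.locallyIntegrable hp).integrableOn_isCompact isCompact_uIcc).intervalIntegrable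

theorem intervalIntegral.integral_neg_self_eq_integral_add_comp_neg {E : Type*}
    [NormedAddCommGroup E] [NormedSpace ℝ E] {f : ℝ → E} {a : ℝ}
    (hf : IntervalIntegrable f volume (-a) a) :
    ∫ x in -a..a, f x = ∫ x in 0..a, (f x + f (-x)) := by
  have hzero : (0 : ℝ) ∈ [[-a, a]] := by
    rcases le_total 0 a with h | h
    · exact mem_uIcc_of_le (by linarith) h
    · exact mem_uIcc_of_ge h (by linarith)
  have h0 : IntervalIntegrable f volume (-a) 0 :=
    hf.mono_set (uIcc_subset_uIcc left_mem_uIcc hzero)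
  have h1 : IntervalIntegrable f volume 0 a :=
    hf.mono_set (uIcc_subset_uIcc hzero right_mem_uIcc)
  have h0' : IntervalIntegrable (fun x => f (-x)) volume 0 a := by
    simpa using ((IntervalIntegrable.iff_comp_neg (f := f)).mp h0).symm
  rw [← integral_add_adjacent_intervals h0 h1, integral_add h1 h0', add_comm,
    ← neg_zero, ← integral_comp_neg (fun x => f x), neg_zero]

theorem fourierInv_indicator_Ioo_of_even {g : ℝ → ℂ} {a : ℝ} (ha : 0 ≤ a)
    (hg : IntervalIntegrable g volume (-a) a) (heven : ∀ᵐ s, g (-s) = g s) (t : ℝ) :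
    𝓕⁻ ((Ioo (-a) a).indicator g) t =
      2 * ∫ s in 0..a, Complex.cos (2 * Real.pi * t * s) * g s := by
  -- the kernel `exp (2πist)`, in the form `Real.fourier_real_eq_integral_exp_smul` produces at `-t`
  set e : ℝ → ℂ := fun s => cexp (↑(-2 * Real.pi * s * -t) * I)
  have he : Continuous e := by fun_prop
  calc 𝓕⁻ ((Ioo (-a) a).indicator g) t = ∫ s in -a..a, e s * g s := by
        rw [Real.fourierInv_eq_fourier_neg, Real.fourier_real_eq_integral_exp_smul,
          intervalIntegral.integral_of_le (by linarith : -a ≤ a), integral_Ioc_eq_integral_Ioo,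
          ← integral_indicator measurableSet_Ioo]
        congr 1 with s
        rw [indicator_mul_right]
        rfl
    _ = ∫ s in 0..a, (e s * g s + e (-s) * g (-s)) :=
        intervalIntegral.integral_neg_self_eq_integral_add_comp_neg
          (hg.continuousOn_mul he.continuousOn)
    _ = ∫ s in 0..a, 2 * (Complex.cos (2 * Real.pi * t * s) * g s) := by
        refine intervalIntegral.integral_congr_ae ?_
        filter_upwards [heven] with s hs _
        rw [hs, ← add_mul, ← mul_assoc, two_cos]
        simp only [e]
        push_cast
        ring_nf
    _ = _ := intervalIntegral.integral_const_mul _ _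

theorem differentiable_intervalIntegral_comp_mul {k : ℂ → ℂ} (hk : Differentiable ℂ k)
    {g : ℝ → ℂ} {a b : ℝ} (hg : IntervalIntegrable g volume a b) :
    Differentiable ℂ fun z : ℂ => ∫ t in a..b, k (z * t) * g t := by
  intro z₀
  have hk'_cont : Continuous fun p : ℂ × ℝ => deriv k (p.1 * p.2) * p.2 :=
    (hk.deriv.continuous.comp (by fun_prop)).mul (by fun_prop)
  obtain ⟨C, hC⟩ := (isCompact_closedBall z₀ 1 |>.prod isCompact_uIcc).exists_bound_of_continuousOn
    (hk'_cont.continuousOn (s := Metric.closedBall z₀ 1 ×ˢ [[a, b]]))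
  have hg_meas := (intervalIntegrable_iff.mp hg).aestronglyMeasurable
  have hF_meas : ∀ z : ℂ, AEStronglyMeasurable (fun t : ℝ => k (z * t) * g t)
      (volume.restrict (Ι a b)) := fun z =>
    ((hk.continuous.comp (by fun_prop)).aestronglyMeasurable).mul hg_meas
  refine (intervalIntegral.hasDerivAt_integral_of_dominated_loc_of_deriv_le
    (F' := fun z t => deriv k (z * t) * t * g t) (bound := fun t => C * ‖g t‖)
    (Metric.ball_mem_nhds z₀ one_pos) (.of_forall hF_meas) ?_ ?_ ?_ (hg.norm.const_mul C) ?_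
    ).2.differentiableAt
  · exact hg.continuousOn_mul (hk.continuous.comp (by fun_prop)).continuousOn
  · exact ((hk'_cont.comp (by fun_prop : Continuous fun t : ℝ => (z₀, t))).aestronglyMeasurable).mul
      hg_meas
  · refine .of_forall fun t ht z hz => ?_
    rw [norm_mul]
    gcongr
    exact hC (z, t) ⟨Metric.ball_subset_closedBall hz, uIoc_subset_uIcc ht⟩
  · refine .of_forall fun t _ z _ => ?_
    have hlin : HasDerivAt (fun w : ℂ => w * t) t z := by
      simpa using (hasDerivAt_id z).mul_const (t : ℂ)
    exact ((hk (z * t)).hasDerivAt.comp z hlin).mul_const (g t)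

theorem Differentiable.eq_of_ae_eq_on_Ioo {E : Type*} [NormedAddCommGroup E] [NormedSpace ℂ E]
    [CompleteSpace E] {Φ Ψ : ℂ → E} (hΦ : Differentiable ℂ Φ)
    (hΨ : Differentiable ℂ Ψ) {a b : ℝ} (hab : a < b)
    (h : ∀ᵐ t : ℝ, t ∈ Ioo a b → Φ t = Ψ t) : Φ = Ψ := by
  have hEqOn : EqOn (fun t : ℝ => Φ t) (fun t : ℝ => Ψ t) (Ioo a b) :=
    Measure.eqOn_Ioo_of_ae_eq volume ((ae_restrict_iff' measurableSet_Ioo).mpr h)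
      (hΦ.continuous.comp continuous_ofReal).continuousOn
      (hΨ.continuous.comp continuous_ofReal).continuousOn
  obtain ⟨c, hc⟩ := nonempty_Ioo.mpr hab
  have hreal : ∀ᶠ t : ℝ in 𝓝[≠] c, Φ t = Ψ t :=
    eventually_nhdsWithin_of_eventually_nhds (mem_of_superset (isOpen_Ioo.mem_nhds hc) hEqOn)
  have htendsto : Tendsto ((↑) : ℝ → ℂ) (𝓝[≠] c) (𝓝[≠] (c : ℂ)) :=
    continuous_ofReal.continuousWithinAt.tendsto_nhdsWithin fun t ht => by simpa using ht
  exact AnalyticOnNhd.eq_of_frequently_eq (fun z _ => hΦ.analyticAt z)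
    (fun z _ => hΨ.analyticAt z) (htendsto.frequently hreal.frequently)

section PsiExtension

variable {lam : ℝ} {F : Lp ℂ 2 (volume : Measure ℝ) ≃ₗᵢ[ℂ] Lp ℂ 2 (volume : Measure ℝ)}
  {g : Lp ℂ 2 (volume : Measure ℝ)}

theorem Pproj_ae_eq_indicator (f : Lp ℂ 2 (volume : Measure ℝ)) :
    Pproj lam f =ᵐ[volume] (Ioo (-lam) lam).indicator f :=
  MemLp.coeFn_toLp _

theorem Fop_ae_eq_cos_integral (hF : IsFourierPlancherel F) (hge : ∀ᵐ x : ℝ, g (-x) = g x) :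
    ∀ᵐ t : ℝ, t ∈ Ioo (-lam) lam →
      Fop lam F g t = 2 * ∫ s in 0..lam, Complex.cos (2 * Real.pi * t * s) * g s := by
  have hgi := (Lp.memLp g).intervalIntegrable one_le_two (-lam) lam
  have hind : Integrable ((Ioo (-lam) lam).indicator g) volume :=
    (integrable_indicator_iff measurableSet_Ioo).mpr (hgi.1.mono_set Ioo_subset_Ioc_self)
  filter_upwards [Pproj_ae_eq_indicator (lam := lam) (F (Pproj lam g)),
    hF _ hind ((Lp.memLp g).indicator measurableSet_Ioo)] with t hFop hFourier ht
  rw [Fop, hFop, indicator_of_mem ht, Pproj, hFourier]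
  exact fourierInv_indicator_Ioo_of_even (by linarith [ht.1, ht.2]) hgi hge t

def psiExt (lam ε : ℝ) (g : Lp ℂ 2 (volume : Measure ℝ)) (z : ℂ) : ℂ :=
  2 * Complex.cos (2 * Real.pi * lam * z) -
    ε * 2 * ∫ t in 0..lam, Complex.cos (2 * Real.pi * z * t) * g t

theorem differentiable_psiExt (lam ε : ℝ) (g : Lp ℂ 2 (volume : Measure ℝ)) :
    Differentiable ℂ (psiExt lam ε g) := by
  have hint := (differentiable_intervalIntegral_comp_mul Complex.differentiable_cos
    ((Lp.memLp g).intervalIntegrable one_le_two 0 lam)).comp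
    (differentiable_id.const_mul (2 * Real.pi : ℂ))
  exact ((Complex.differentiable_cos.comp (differentiable_id.const_mul _)).const_mul 2).sub
    (hint.const_mul _)

theorem psiExt_ofReal (lam ε : ℝ) (g : Lp ℂ 2 (volume : Measure ℝ)) (x : ℝ) :
    psiExt lam ε g x = psiFun lam ε g x := by
  simp only [psiExt, psiFun]
  push_cast
  rfl

theorem psiExt_ae_eq_on_Ioo {ε : ℝ} (hF : IsFourierPlancherel F)
    (hge : ∀ᵐ x : ℝ, g (-x) = g x)
    (hg : ∀ᵐ t : ℝ, g t + (ε : ℂ) * (Fop lam F g) t =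
      Set.indicator (Ioo (-lam) lam)
        (fun s : ℝ => (2 * Real.cos (2 * Real.pi * lam * s) : ℂ)) t) :
    ∀ᵐ t : ℝ, t ∈ Ioo (-lam) lam → psiExt lam ε g t = g t := by
  filter_upwards [hg, Fop_ae_eq_cos_integral hF hge] with t hgt hFop ht
  rw [indicator_of_mem ht, hFop ht] at hgt
  push_cast at hgt
  rw [psiExt]
  linear_combination -hgt

end PsiExtension

theorem psi_entire_extension_general (lam : ℝ) (hlam : 0 < lam)
    (F : Lp ℂ 2 (volume : Measure ℝ) ≃ₗᵢ[ℂ] Lp ℂ 2 (volume : Measure ℝ))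
    (hF : IsFourierPlancherel F)
    (ε : ℝ)
    (g : Lp ℂ 2 (volume : Measure ℝ))
    (hge : ∀ᵐ x : ℝ, g (-x) = g x)
    (hg : ∀ᵐ t : ℝ, g t + (ε : ℂ) * (Fop lam F g) t =
      Set.indicator (Ioo (-lam) lam)
        (fun s : ℝ => (2 * Real.cos (2 * Real.pi * lam * s) : ℂ)) t) :
    ∃ Φ : ℂ → ℂ, Differentiable ℂ Φ ∧
      (∀ x : ℝ, Φ x = psiFun lam ε g x) ∧
      (∀ᵐ t : ℝ, t ∈ Ioo (-lam) lam → Φ t = g t) ∧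
      ∀ Ψ : ℂ → ℂ, Differentiable ℂ Ψ →
        (∀ᵐ t : ℝ, t ∈ Ioo (-lam) lam → Ψ t = g t) → Ψ = Φ := by
  have hΦ := differentiable_psiExt lam ε g
  have hΦg := psiExt_ae_eq_on_Ioo hF hge hg
  refine ⟨psiExt lam ε g, hΦ, psiExt_ofReal lam ε g, hΦg,
    fun Ψ hΨ hΨg => hΨ.eq_of_ae_eq_on_Ioo hΦ (neg_lt_self hlam) ?_⟩
  filter_upwards [hΨg, hΦg] with t hΨt hΦt ht
  rw [hΨt ht, hΦt ht]

/-- `ψ_ε` extends to the unique entire function whose restriction to `(−λ,λ)`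
coincides (a.e.) with `g_ε = (1 + εF_λ)^{−1}(1_{(−λ,λ)}·2cos(2πλ·))`. -/
theorem psi_entire_extension (lam : ℝ) (hlam : 0 < lam)
    (F : Lp ℂ 2 (volume : Measure ℝ) ≃ₗᵢ[ℂ] Lp ℂ 2 (volume : Measure ℝ))
    (hF : IsFourierPlancherel F)
    (ε : ℝ) (hε : ε = 1 ∨ ε = -1)
    (g : Lp ℂ 2 (volume : Measure ℝ))
    (hge : ∀ᵐ x : ℝ, g (-x) = g x)
    (hgs : ∀ᵐ x : ℝ, x ∉ Ioo (-lam) lam → g x = 0)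
    (hg : ∀ᵐ t : ℝ, g t + (ε : ℂ) * (Fop lam F g) t =
      Set.indicator (Ioo (-lam) lam)
        (fun s : ℝ => (2 * Real.cos (2 * Real.pi * lam * s) : ℂ)) t) :
    ∃ Φ : ℂ → ℂ, Differentiable ℂ Φ ∧
      (∀ x : ℝ, Φ x = psiFun lam ε g x) ∧
      (∀ᵐ t : ℝ, t ∈ Ioo (-lam) lam → Φ t = g t) ∧
      ∀ Ψ : ℂ → ℂ, Differentiable ℂ Ψ →
        (∀ᵐ t : ℝ, t ∈ Ioo (-lam) lam → Ψ t = g t) → Ψ = Φ :=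
  psi_entire_extension_general lam hlam F hF ε g hge hg
end
end
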